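/- arXiv:1711.05360 — 4 statements merged into one kernel-verified Lean document; each statement's English description precedes it below -/
import Mathlib

section
/- The minimum variance portfolio w(Σ), i.e., the unique minimizer of wᵀΣw over {w ∈ ℝ^N : 1_Nᵀ w = 1}, is given by w(Σ) = c · Δ⁻¹(1_N β_MV − β), where β_MV = (1 + σ² Σ_{k=1}^N β_k²/δ_k²)/(σ² Σ_{k=1}^N β_k/δ_k²) and c is the unique normalizing constant making the entries of w(Σ) sum to one. -/
open Filter
open scoped Topology

/-- Euclidean inner product on `Fin N → ℝ`. -/
noncomputable def dotp {N : ℕ} (x y : Fin N → ℝ) : ℝ := ∑ i, x i * y i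

lemma quad_eq {N : ℕ} (β d : Fin N → ℝ) (σ : ℝ) (x y : Fin N → ℝ) :
    dotp x ((σ ^ 2 • Matrix.vecMulVec β β + Matrix.diagonal fun k => d k ^ 2).mulVec y)
      = σ ^ 2 * dotp β x * dotp β y + ∑ i, d i ^ 2 * x i * y i := by
  simp only [dotp, Matrix.mulVec, dotProduct, Matrix.add_apply, Matrix.smul_apply,
    Matrix.vecMulVec_apply, Matrix.diagonal_apply, smul_eq_mul]
  have h : ∀ i, x i * (∑ j, (σ ^ 2 * (β i * β j) + if i = j then d i ^ 2 else 0) * y j)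
      = σ ^ 2 * (β i * x i) * (∑ j, β j * y j) + d i ^ 2 * x i * y i := by
    intro i
    simp only [add_mul, Finset.sum_add_distrib, ite_mul, zero_mul, Finset.sum_ite_eq,
      Finset.mem_univ, if_true]
    rw [mul_add, Finset.mul_sum, Finset.mul_sum]
    congr 1
    · exact Finset.sum_congr rfl fun j _ => by ring
    · ring
  rw [Finset.sum_congr rfl fun i _ => h i, Finset.sum_add_distrib, ← Finset.sum_mul,
    ← Finset.mul_sum]

lemma key_min {N : ℕ} (β d : Fin N → ℝ) (σ : ℝ) (hd : ∀ k, 0 < d k)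
    (w : Fin N → ℝ) (γ : ℝ)
    (hw : ∀ i, σ ^ 2 * dotp β w * β i + d i ^ 2 * w i = γ)
    (v : Fin N → ℝ) (huv : (∑ i, (v i - w i)) = 0) :
    (σ ^ 2 * dotp β w * dotp β w + ∑ i, d i ^ 2 * w i * w i
      ≤ σ ^ 2 * dotp β v * dotp β v + ∑ i, d i ^ 2 * v i * v i)
    ∧ (σ ^ 2 * dotp β v * dotp β v + ∑ i, d i ^ 2 * v i * v i
      ≤ σ ^ 2 * dotp β w * dotp β w + ∑ i, d i ^ 2 * w i * w i → v = w) := by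
  set u : Fin N → ℝ := fun i => v i - w i with hu
  have hβv : dotp β v = dotp β w + dotp β u := by
    simp only [dotp, hu, ← Finset.sum_add_distrib]
    exact Finset.sum_congr rfl fun i _ => by ring
  have hdv : ∑ i, d i ^ 2 * v i * v i
      = (∑ i, d i ^ 2 * w i * w i) + 2 * (∑ i, d i ^ 2 * w i * u i)
        + ∑ i, d i ^ 2 * u i * u i := by
    rw [Finset.mul_sum, ← Finset.sum_add_distrib, ← Finset.sum_add_distrib]
    exact Finset.sum_congr rfl fun i _ => by simp only [hu]; ring
  have hqwu : σ ^ 2 * dotp β w * dotp β u + ∑ i, d i ^ 2 * w i * u i = 0 := by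
    have h1 : σ ^ 2 * dotp β w * dotp β u + ∑ i, d i ^ 2 * w i * u i
        = ∑ i, (σ ^ 2 * dotp β w * β i + d i ^ 2 * w i) * u i := by
      simp only [dotp, add_mul, Finset.sum_add_distrib, Finset.mul_sum]
      congr 1
      exact Finset.sum_congr rfl fun i _ => by ring
    rw [h1, Finset.sum_congr rfl fun i _ => by rw [hw i], ← Finset.mul_sum, huv, mul_zero]
  have hsq : ∑ i, d i ^ 2 * u i * u i = ∑ i, (d i * u i) ^ 2 :=
    Finset.sum_congr rfl fun i _ => by ring
  have hsq_nonneg : 0 ≤ ∑ i, (d i * u i) ^ 2 :=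
    Finset.sum_nonneg fun i _ => sq_nonneg _
  have hβu_nonneg : 0 ≤ σ ^ 2 * dotp β u * dotp β u := by
    nlinarith [sq_nonneg (σ * dotp β u)]
  have hexp : σ ^ 2 * dotp β v * dotp β v + ∑ i, d i ^ 2 * v i * v i
      = (σ ^ 2 * dotp β w * dotp β w + ∑ i, d i ^ 2 * w i * w i)
        + 2 * (σ ^ 2 * dotp β w * dotp β u + ∑ i, d i ^ 2 * w i * u i)
        + (σ ^ 2 * dotp β u * dotp β u + ∑ i, d i ^ 2 * u i * u i) := by
    rw [hβv, hdv]; ring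
  constructor
  · rw [hexp, hqwu, hsq]; linarith
  · intro hle
    rw [hexp, hqwu, hsq] at hle
    have hz : ∑ i, (d i * u i) ^ 2 = 0 := by linarith
    have hall := (Finset.sum_eq_zero_iff_of_nonneg fun i _ => sq_nonneg (d i * u i)).mp hz
    funext i
    have h0 : (d i * u i) ^ 2 = 0 := hall i (Finset.mem_univ i)
    have hdi := (hd i).ne'
    have hui : v i - w i = 0 := by
      have h1 := pow_eq_zero_iff (n := 2) (by norm_num) |>.mp h0
      rcases mul_eq_zero.mp h1 with h | h
      · exact absurd h hdi
      · exact h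
    linarith

theorem dispersion_bias_stmt4
    (N : ℕ) (hN : 1 ≤ N) (β : Fin N → ℝ) (σ : ℝ) (hσ : 0 < σ)
    (d : Fin N → ℝ) (hd : ∀ k, 0 < d k)
    (hsum : (∑ k, β k / d k ^ 2) ≠ 0) :
    ∃ c : ℝ,
      ((∑ i, c * (((1 + σ ^ 2 * ∑ k, β k ^ 2 / d k ^ 2)
            / (σ ^ 2 * ∑ k, β k / d k ^ 2) - β i) / d i ^ 2)) = 1 ∧
        (∀ v : Fin N → ℝ, (∑ i, v i) = 1 →
          dotp (fun i => c * (((1 + σ ^ 2 * ∑ k, β k ^ 2 / d k ^ 2)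
              / (σ ^ 2 * ∑ k, β k / d k ^ 2) - β i) / d i ^ 2))
            ((σ ^ 2 • Matrix.vecMulVec β β
                + Matrix.diagonal fun k => d k ^ 2).mulVec
              (fun i => c * (((1 + σ ^ 2 * ∑ k, β k ^ 2 / d k ^ 2)
                / (σ ^ 2 * ∑ k, β k / d k ^ 2) - β i) / d i ^ 2)))
          ≤ dotp v ((σ ^ 2 • Matrix.vecMulVec β β
              + Matrix.diagonal fun k => d k ^ 2).mulVec v)) ∧
        (∀ v : Fin N → ℝ, (∑ i, v i) = 1 →
          dotp v ((σ ^ 2 • Matrix.vecMulVec β β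
              + Matrix.diagonal fun k => d k ^ 2).mulVec v)
            ≤ dotp (fun i => c * (((1 + σ ^ 2 * ∑ k, β k ^ 2 / d k ^ 2)
                / (σ ^ 2 * ∑ k, β k / d k ^ 2) - β i) / d i ^ 2))
              ((σ ^ 2 • Matrix.vecMulVec β β
                  + Matrix.diagonal fun k => d k ^ 2).mulVec
                (fun i => c * (((1 + σ ^ 2 * ∑ k, β k ^ 2 / d k ^ 2)
                  / (σ ^ 2 * ∑ k, β k / d k ^ 2) - β i) / d i ^ 2))) →
          v = fun i => c * (((1 + σ ^ 2 * ∑ k, β k ^ 2 / d k ^ 2)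
            / (σ ^ 2 * ∑ k, β k / d k ^ 2) - β i) / d i ^ 2))) ∧
      (∀ c' : ℝ,
        (∑ i, c' * (((1 + σ ^ 2 * ∑ k, β k ^ 2 / d k ^ 2)
            / (σ ^ 2 * ∑ k, β k / d k ^ 2) - β i) / d i ^ 2)) = 1 → c' = c) := by
  have hσ2 : σ ^ 2 ≠ 0 := by positivity
  have hdk : ∀ k, d k ^ 2 ≠ 0 := fun k => by have := hd k; positivity
  obtain ⟨B1, hB1⟩ : ∃ t : ℝ, t = ∑ k, β k / d k ^ 2 := ⟨_, rfl⟩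
  obtain ⟨B2, hB2⟩ : ∃ t : ℝ, t = ∑ k, β k ^ 2 / d k ^ 2 := ⟨_, rfl⟩
  obtain ⟨A, hA⟩ : ∃ t : ℝ, t = ∑ k : Fin N, 1 / d k ^ 2 := ⟨_, rfl⟩
  rw [← hB1] at hsum
  obtain ⟨m, hm⟩ : ∃ t : ℝ, t = (1 + σ ^ 2 * B2) / (σ ^ 2 * B1) := ⟨_, rfl⟩
  rw [← hB1, ← hB2, ← hm]
  obtain ⟨S, hS⟩ : ∃ t : ℝ, t = ∑ i, (m - β i) / d i ^ 2 := ⟨_, rfl⟩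
  -- basic facts
  have hβx : (∑ i, β i * ((m - β i) / d i ^ 2)) = 1 / σ ^ 2 := by
    have h1 : (∑ i, β i * ((m - β i) / d i ^ 2)) = m * B1 - B2 := by
      rw [hB1, hB2, Finset.mul_sum, ← Finset.sum_sub_distrib]
      refine Finset.sum_congr rfl fun i _ => ?_
      field_simp
    rw [h1, hm]
    field_simp
    ring
  have hSx : S = m * A - B1 := by
    rw [hS, hA, hB1, Finset.mul_sum, ← Finset.sum_sub_distrib]
    refine Finset.sum_congr rfl fun i _ => ?_
    field_simp
  have hCS : B1 ^ 2 ≤ B2 * A := by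
    have h := Finset.sum_mul_sq_le_sq_mul_sq Finset.univ (fun k => β k / d k)
      (fun k : Fin N => 1 / d k)
    have e1 : ∀ k : Fin N, β k / d k * (1 / d k) = β k / d k ^ 2 := fun k => by
      rw [div_mul_div_comm, mul_one, ← sq]
    have e2 : ∀ k : Fin N, (β k / d k) ^ 2 = β k ^ 2 / d k ^ 2 := fun k => by rw [div_pow]
    have e3 : ∀ k : Fin N, (1 / d k) ^ 2 = 1 / d k ^ 2 := fun k => by rw [div_pow, one_pow]
    rw [hB1, hB2, hA]
    simpa only [Finset.sum_congr rfl fun k _ => e1 k, Finset.sum_congr rfl fun k _ => e2 k,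
      Finset.sum_congr rfl fun k _ => e3 k] using h
  have hApos : 0 < A := by
    rw [hA]
    refine Finset.sum_pos (fun k _ => by have := hd k; positivity) ?_
    have : Nonempty (Fin N) := Fin.pos_iff_nonempty.mp hN
    exact Finset.univ_nonempty
  have hSne : S ≠ 0 := by
    have hkey : σ ^ 2 * B1 * S = A + σ ^ 2 * (B2 * A - B1 ^ 2) := by
      rw [hSx, hm]
      field_simp
      ring
    intro h0
    rw [h0, mul_zero] at hkey
    have hpos : 0 < A + σ ^ 2 * (B2 * A - B1 ^ 2) := by nlinarith
    linarith
  -- the portfolio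
  have hβw : dotp β (fun i => S⁻¹ * ((m - β i) / d i ^ 2)) = S⁻¹ * (1 / σ ^ 2) := by
    rw [← hβx]
    simp only [dotp, Finset.mul_sum]
    exact Finset.sum_congr rfl fun i _ => by ring
  have hwconst : ∀ i, σ ^ 2 * dotp β (fun i => S⁻¹ * ((m - β i) / d i ^ 2)) * β i
      + d i ^ 2 * (S⁻¹ * ((m - β i) / d i ^ 2)) = S⁻¹ * m := by
    intro i
    rw [hβw]
    have e1 : σ ^ 2 * (S⁻¹ * (1 / σ ^ 2)) = S⁻¹ := by
      rw [mul_comm, mul_assoc, one_div_mul_cancel hσ2, mul_one]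
    have e2 : d i ^ 2 * (S⁻¹ * ((m - β i) / d i ^ 2)) = S⁻¹ * (m - β i) := by
      rw [mul_comm, mul_assoc, div_mul_cancel₀ _ (hdk i)]
    rw [e1, e2]
    ring
  have hwsum : (∑ i, S⁻¹ * ((m - β i) / d i ^ 2)) = 1 := by
    rw [← Finset.mul_sum, ← hS]
    exact inv_mul_cancel₀ hSne
  refine ⟨S⁻¹, ⟨hwsum, ?_, ?_⟩, ?_⟩
  · intro v hv
    rw [quad_eq, quad_eq]
    refine (key_min β d σ hd _ (S⁻¹ * m) hwconst v ?_).1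
    rw [Finset.sum_sub_distrib, hv, hwsum, sub_self]
  · intro v hv hle
    rw [quad_eq, quad_eq] at hle
    refine (key_min β d σ hd _ (S⁻¹ * m) hwconst v ?_).2 hle
    rw [Finset.sum_sub_distrib, hv, hwsum, sub_self]
  · intro c' hc'
    rw [← Finset.mul_sum, ← hS] at hc'
    exact eq_inv_of_mul_eq_one_left hc'
end

section
/- Suppose β ≠ z, β̂ ∉ {z, −z}, and βᵀβ̂ − (βᵀz)(β̂ᵀz) ≠ 0. Then there exists ρ* ∈ ℝ such that the point x = β̂(ρ*) on the geodesic satisfies x ∈ S_β (i.e., γ_{β,z} − γ_{x,z} γ_{x,β} = 0) and x ≠ z. -/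
/-!
Write `d = β̂ᵀz`. For unit `β̂, z` one has `‖β̂ + ρ z‖² = 1 + 2ρd + ρ²`, which is positive for
every `ρ` because `d² < 1` when `β̂ ≠ ±z`. After clearing this denominator, the defining equation
of `S_β` at `β̂(ρ)` is linear in `ρ`, with slope `-(βᵀβ̂ - (βᵀz)(β̂ᵀz)) ≠ 0`, so it has a root `ρ*`.
Finally, `β̂(ρ) = z` would give `‖β̂ + ρ z‖ = d + ρ`, and squaring would force `d² = 1`.
-/

open Filter
open scoped Topology

/-- The point `β̂(ρ) = (β̂ + ρ z)/‖β̂ + ρ z‖₂` on the geodesic through `β̂` and `z`. -/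
noncomputable def geo {N : ℕ} (b z : Fin N → ℝ) (ρ : ℝ) : Fin N → ℝ :=
  fun i => (b i + ρ * z i) / Real.sqrt (∑ j, (b j + ρ * z j) ^ 2)

theorem real_inner_sq_lt_one_of_norm_eq_one {F : Type*} [NormedAddCommGroup F]
    [InnerProductSpace ℝ F] {x y : F} (hx : ‖x‖ = 1) (hy : ‖y‖ = 1) (hxy : x ≠ y)
    (hxy' : x ≠ -y) : inner ℝ x y ^ 2 < 1 := by
  have hlt : inner ℝ x y < 1 := (inner_lt_one_iff_real_of_norm_eq_one hx hy).2 hxy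
  have hgt : -1 < inner ℝ x y :=
    (neg_one_le_real_inner_of_norm_eq_one hx hy).lt_of_ne
      fun h => hxy' ((inner_eq_neg_one_iff_of_norm_eq_one hx hy).1 h.symm)
  nlinarith

section Geodesic

variable {N : ℕ} {b z : Fin N → ℝ}

lemma dotp_eq_dotProduct (x y : Fin N → ℝ) : dotp x y = x ⬝ᵥ y := rfl

lemma dotp_comm (x y : Fin N → ℝ) : dotp x y = dotp y x := dotProduct_comm x y

lemma dotp_eq_inner (x y : Fin N → ℝ) :
    dotp x y = inner ℝ (WithLp.toLp 2 x) (WithLp.toLp 2 y) := by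
  rw [EuclideanSpace.inner_toLp_toLp, star_trivial, dotp_comm, dotp_eq_dotProduct]

lemma norm_toLp_eq_one {x : Fin N → ℝ} (hx : dotp x x = 1) : ‖WithLp.toLp 2 x‖ = 1 := by
  rw [dotp_eq_inner, real_inner_self_eq_norm_sq] at hx
  exact (pow_eq_one_iff_of_nonneg (norm_nonneg _) two_ne_zero).1 hx

lemma dotp_sq_lt_one {x y : Fin N → ℝ} (hx : dotp x x = 1) (hy : dotp y y = 1) (hxy : x ≠ y)
    (hxy' : x ≠ -y) : dotp x y ^ 2 < 1 := by
  rw [dotp_eq_inner]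
  exact real_inner_sq_lt_one_of_norm_eq_one (norm_toLp_eq_one hx) (norm_toLp_eq_one hy)
    (by simpa using hxy) (by simpa [← WithLp.toLp_neg] using hxy')

lemma one_add_two_mul_add_sq_pos {d : ℝ} (hd : d ^ 2 < 1) (ρ : ℝ) : 0 < 1 + 2 * ρ * d + ρ ^ 2 := by
  nlinarith [sq_nonneg (ρ + d)]

lemma dotp_add_smul_self (hb : dotp b b = 1) (hz : dotp z z = 1) (ρ : ℝ) :
    dotp (b + ρ • z) (b + ρ • z) = 1 + 2 * ρ * dotp b z + ρ ^ 2 := by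
  simp only [dotp_eq_dotProduct, add_dotProduct, dotProduct_add, smul_dotProduct,
    dotProduct_smul, smul_eq_mul] at *
  rw [hb, hz, dotProduct_comm z b]
  ring

lemma geo_eq_smul (hb : dotp b b = 1) (hz : dotp z z = 1) (ρ : ℝ) :
    geo b z ρ = (√(1 + 2 * ρ * dotp b z + ρ ^ 2))⁻¹ • (b + ρ • z) := by
  rw [← dotp_add_smul_self hb hz]
  funext i
  simp [geo, dotp, sq, div_eq_inv_mul]

lemma dotp_geo_left (hb : dotp b b = 1) (hz : dotp z z = 1) (ρ : ℝ) (v : Fin N → ℝ) :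
    dotp (geo b z ρ) v = (dotp b v + ρ * dotp z v) / √(1 + 2 * ρ * dotp b z + ρ ^ 2) := by
  rw [geo_eq_smul hb hz]
  simp only [dotp_eq_dotProduct, smul_dotProduct, add_dotProduct, smul_eq_mul]
  ring

lemma dotp_geo_self (hb : dotp b b = 1) (hz : dotp z z = 1) (hd : dotp b z ^ 2 < 1) (ρ : ℝ) :
    dotp (geo b z ρ) (geo b z ρ) = 1 := by
  have hS := one_add_two_mul_add_sq_pos hd ρ
  rw [geo_eq_smul hb hz, dotp_eq_dotProduct, smul_dotProduct, dotProduct_smul,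
    ← dotp_eq_dotProduct, dotp_add_smul_self hb hz, smul_eq_mul, smul_eq_mul, ← mul_assoc,
    ← mul_inv, Real.mul_self_sqrt hS.le, inv_mul_cancel₀ hS.ne']

lemma dotp_sub_dotp_geo_mul_dotp_geo (hb : dotp b b = 1) (hz : dotp z z = 1)
    (hd : dotp b z ^ 2 < 1) (β : Fin N → ℝ) (ρ : ℝ) :
    dotp β z - dotp (geo b z ρ) z * dotp (geo b z ρ) β
      = (dotp β z - dotp β b * dotp b z - ρ * (dotp β b - dotp β z * dotp b z))
        / (1 + 2 * ρ * dotp b z + ρ ^ 2) := by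
  have hS := one_add_two_mul_add_sq_pos hd ρ
  rw [dotp_geo_left hb hz, dotp_geo_left hb hz, div_mul_div_comm, ← sq,
    Real.sq_sqrt hS.le, hz, dotp_comm b β, dotp_comm z β,
    eq_div_iff hS.ne', sub_mul, div_mul_cancel₀ _ hS.ne']
  ring

lemma geo_ne_right (hb : dotp b b = 1) (hz : dotp z z = 1) (hd : dotp b z ^ 2 < 1) (ρ : ℝ) :
    geo b z ρ ≠ z := by
  intro h
  have hS := one_add_two_mul_add_sq_pos hd ρ
  have hnorm := dotp_geo_left hb hz ρ z
  rw [h, hz, mul_one, eq_div_iff (Real.sqrt_pos.2 hS).ne', one_mul] at hnorm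
  have hsq := congrArg (· ^ 2) hnorm
  simp only [Real.sq_sqrt hS.le] at hsq
  nlinarith

end Geodesic

theorem dispersion_bias_stmt5_general
    (N : ℕ) (β bhat z : Fin N → ℝ)
    (hb : dotp bhat bhat = 1) (hz : dotp z z = 1)
    (hbz : bhat ≠ z) (hbz' : bhat ≠ -z)
    (hD : dotp β bhat - dotp β z * dotp bhat z ≠ 0) :
    ∃ ρ : ℝ,
      dotp (geo bhat z ρ) (geo bhat z ρ) = 1 ∧
      dotp β z - dotp (geo bhat z ρ) z * dotp (geo bhat z ρ) β = 0 ∧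
      geo bhat z ρ ≠ z := by
  have hd := dotp_sq_lt_one hb hz hbz hbz'
  refine ⟨(dotp β z - dotp β bhat * dotp bhat z) / (dotp β bhat - dotp β z * dotp bhat z),
    dotp_geo_self hb hz hd _, ?_, geo_ne_right hb hz hd _⟩
  rw [dotp_sub_dotp_geo_mul_dotp_geo hb hz hd, div_mul_cancel₀ _ hD, sub_self, zero_div]

/-- if `β ≠ z`, `β̂ ∉ {z, −z}` and `βᵀβ̂ − (βᵀz)(β̂ᵀz) ≠ 0`, then some point
`x = β̂(ρ*)` of the geodesic lies in `S_β = {x : ‖x‖ = 1, γ_{β,z} − γ_{x,z} γ_{x,β} = 0}`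
and differs from `z`. -/
theorem dispersion_bias_stmt5
    (N : ℕ) (hN : 2 ≤ N) (β bhat z : Fin N → ℝ)
    (hβ : dotp β β = 1) (hb : dotp bhat bhat = 1) (hz : dotp z z = 1)
    (hβz : β ≠ z) (hbz : bhat ≠ z) (hbz' : bhat ≠ -z)
    (hD : dotp β bhat - dotp β z * dotp bhat z ≠ 0) :
    ∃ ρ : ℝ,
      dotp (geo bhat z ρ) (geo bhat z ρ) = 1 ∧
      dotp β z - dotp (geo bhat z ρ) z * dotp (geo bhat z ρ) β = 0 ∧
      geo bhat z ρ ≠ z :=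
  dispersion_bias_stmt5_general N β bhat z hb hz hbz hbz' hD
end

section
/- Suppose β̂ ∉ {z, −z} and D := γ_{β,β̂} − γ_{β,z} γ_{β̂,z} > 0, and let ρ* = (γ_{β,z} − γ_{β,β̂} γ_{β̂,z})/D. Then the corrected vector β̂(ρ*) satisfies γ_{β, β̂(ρ*)}² = γ_{β,z}² + (γ_{β,β̂} − γ_{β̂,z} γ_{β,z})²/(1 − γ_{β̂,z}²); that is, β̂(ρ*) realizes the principal angle between β and the two-dimensional span of z and β̂. -/
open Filter
open scoped Topology

/-- if `β̂ ∉ {z, −z}` and `D = γ_{β,β̂} − γ_{β,z} γ_{β̂,z} > 0`, then the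
corrected vector `β̂(ρ*)` with `ρ* = (γ_{β,z} − γ_{β,β̂} γ_{β̂,z})/D` satisfies
`γ_{β,β̂(ρ*)}² = γ_{β,z}² + (γ_{β,β̂} − γ_{β̂,z} γ_{β,z})²/(1 − γ_{β̂,z}²)`,
i.e. it realizes the principal angle between `β` and `span{z, β̂}`. -/
theorem dispersion_bias_stmt10
    (N : ℕ) (hN : 2 ≤ N) (β bhat z : Fin N → ℝ)
    (hβ : dotp β β = 1) (hb : dotp bhat bhat = 1) (hz : dotp z z = 1)
    (hbz : bhat ≠ z) (hbz' : bhat ≠ -z)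
    (hD : 0 < dotp β bhat - dotp β z * dotp bhat z)
    (ρstar : ℝ)
    (hρ : ρstar = (dotp β z - dotp β bhat * dotp bhat z)
        / (dotp β bhat - dotp β z * dotp bhat z)) :
    dotp β (geo bhat z ρstar) ^ 2
      = dotp β z ^ 2
        + (dotp β bhat - dotp bhat z * dotp β z) ^ 2 / (1 - dotp bhat z ^ 2) := by
  set a := dotp β bhat with ha
  set c := dotp β z with hc
  set g := dotp bhat z with hg
  -- g^2 < 1
  have hexp : ∀ i, (bhat i - g * z i) ^ 2
      = bhat i * bhat i - 2 * g * (bhat i * z i) + g ^ 2 * (z i * z i) := by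
    intro i; ring
  have hsum1 : ∑ i, (bhat i - g * z i) ^ 2 = 1 - g ^ 2 := by
    calc ∑ i, (bhat i - g * z i) ^ 2
        = ∑ i, (bhat i * bhat i - 2 * g * (bhat i * z i) + g ^ 2 * (z i * z i)) :=
          Finset.sum_congr rfl (fun i _ => hexp i)
      _ = dotp bhat bhat - 2 * g * dotp bhat z + g ^ 2 * dotp z z := by
          simp [dotp, Finset.sum_add_distrib, Finset.sum_sub_distrib, Finset.mul_sum]
      _ = 1 - g ^ 2 := by rw [hb, hz, ← hg]; ring
  have hsnn : (0:ℝ) ≤ ∑ i, (bhat i - g * z i) ^ 2 :=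
    Finset.sum_nonneg fun i _ => sq_nonneg _
  have hle : g ^ 2 ≤ 1 := by nlinarith
  have hg2 : g ^ 2 < 1 := by
    rcases lt_or_eq_of_le hle with h | h
    · exact h
    · exfalso
      have hzero : ∑ i, (bhat i - g * z i) ^ 2 = 0 := by rw [hsum1, h]; ring
      have heach : ∀ i, bhat i = g * z i := by
        intro i
        have := (Finset.sum_eq_zero_iff_of_nonneg
          (fun i _ => sq_nonneg (bhat i - g * z i))).mp hzero i (Finset.mem_univ i)
        have := pow_eq_zero_iff (n := 2) (by norm_num) |>.mp this
        linarith [sub_eq_zero.mp this]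
      have : (g - 1) * (g + 1) = 0 := by nlinarith
      rcases mul_eq_zero.mp this with h1 | h1
      · apply hbz; funext i
        have : g = 1 := by linarith
        simpa [this] using heach i
      · apply hbz'; funext i
        have : g = -1 := by linarith
        simp only [Pi.neg_apply]
        have hgm : g = -1 := by linarith
        rw [heach i, hgm]; ring
  have h1g : (0:ℝ) < 1 - g ^ 2 := by linarith
  -- the norm squared of bhat + ρ z
  have hsum2 : ∑ j, (bhat j + ρstar * z j) ^ 2 = 1 + 2 * ρstar * g + ρstar ^ 2 := by
    calc ∑ j, (bhat j + ρstar * z j) ^ 2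
        = ∑ j, (bhat j * bhat j + 2 * ρstar * (bhat j * z j) + ρstar ^ 2 * (z j * z j)) :=
          Finset.sum_congr rfl (fun j _ => by ring)
      _ = dotp bhat bhat + 2 * ρstar * dotp bhat z + ρstar ^ 2 * dotp z z := by
          simp [dotp, Finset.sum_add_distrib, Finset.mul_sum]
      _ = 1 + 2 * ρstar * g + ρstar ^ 2 := by rw [hb, hz, ← hg]; ring
  set D := a - c * g with hDdef
  have hDne : D ≠ 0 := ne_of_gt hD
  have hqD : ρstar * D = c - a * g := by rw [hρ]; field_simp
  have hT : 0 < 1 + 2 * ρstar * g + ρstar ^ 2 := by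
    have key : (1 + 2 * ρstar * g + ρstar ^ 2) * D ^ 2
        = (D ^ 2 + c ^ 2 * (1 - g ^ 2)) * (1 - g ^ 2) := by
      have : ρstar = (c - a * g) / D := by rw [hρ]
      rw [this]; field_simp; ring
    nlinarith [key, mul_pos hD hD, mul_pos (mul_pos hD hD) h1g,
      mul_nonneg (sq_nonneg c) (mul_nonneg h1g.le h1g.le)]
  have hTs : Real.sqrt (∑ j, (bhat j + ρstar * z j) ^ 2)
      = Real.sqrt (1 + 2 * ρstar * g + ρstar ^ 2) := by rw [hsum2]
  have hsqrt_pos : 0 < Real.sqrt (1 + 2 * ρstar * g + ρstar ^ 2) := Real.sqrt_pos.mpr hT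
  -- numerator
  have hnum : dotp β (geo bhat z ρstar)
      = (a + ρstar * c) / Real.sqrt (1 + 2 * ρstar * g + ρstar ^ 2) := by
    unfold dotp geo
    calc ∑ i, β i * ((bhat i + ρstar * z i) / Real.sqrt (∑ j, (bhat j + ρstar * z j) ^ 2))
        = (∑ i, β i * (bhat i + ρstar * z i)) / Real.sqrt (∑ j, (bhat j + ρstar * z j) ^ 2) := by
          rw [Finset.sum_div]; exact Finset.sum_congr rfl (fun i _ => by ring)
      _ = (a + ρstar * c) / Real.sqrt (∑ j, (bhat j + ρstar * z j) ^ 2) := by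
          congr 1
          calc ∑ i, β i * (bhat i + ρstar * z i)
              = ∑ i, (β i * bhat i + ρstar * (β i * z i)) :=
                Finset.sum_congr rfl (fun i _ => by ring)
            _ = dotp β bhat + ρstar * dotp β z := by
                simp [dotp, Finset.sum_add_distrib, Finset.mul_sum]
            _ = a + ρstar * c := by rw [← ha, ← hc]
      _ = (a + ρstar * c) / Real.sqrt (1 + 2 * ρstar * g + ρstar ^ 2) := by rw [hTs]
  have hSpos : (0:ℝ) < a ^ 2 + c ^ 2 - 2 * a * c * g := by
    nlinarith [mul_pos hD hD, mul_nonneg (sq_nonneg c) h1g.le]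
  have hA : a + ρstar * c = (a ^ 2 + c ^ 2 - 2 * a * c * g) / D := by
    rw [eq_div_iff hDne]; linear_combination c * hqD
  have hTeq : 1 + 2 * ρstar * g + ρstar ^ 2
      = (a ^ 2 + c ^ 2 - 2 * a * c * g) * (1 - g ^ 2) / D ^ 2 := by
    rw [eq_div_iff (pow_ne_zero 2 hDne)]
    linear_combination (ρstar * D + (c - a * g) + 2 * g * D) * hqD
  rw [hnum, div_pow, Real.sq_sqrt (le_of_lt hT), hA, hTeq]
  field_simp
  ring
end

section
/- Let (Ω, 𝓕, P) be a probability space and for each n ≥ 1 let X_n : Ω → ℝ^n be a random vector whose law is the uniform (rotation-invariant) probability measure on the unit sphere S^{n−1} ⊂ ℝ^n, and let Y_n : Ω → ℝ^n be a random vector with ‖Y_n‖₂ = 1 almost surely that is independent of X_n. Then X_nᵀ Y_n → 0 almost surely as n → ∞. -/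
/-!
Rotation invariance of the law `μ` of `X` means that `⟪v, X⟫` has the law of `‖v‖ X₀`, so
`E ⟪v, X⟫⁴ = ‖v‖⁴ m` with `m = E X₀⁴`. Testing this on `v = eᵢ ± eⱼ` gives `E Xᵢ² Xⱼ² = m / 3`,
and expanding `1 = E (∑ Xᵢ²)²` then yields `n (n + 2) m = 3`. Conditioning on the independent
unit vector `Y` gives `E ⟪X, Y⟫⁴ = m = O(n⁻²)`, which is summable, so `⟪X, Y⟫ → 0` almost surely.
-/

open Filter MeasureTheory ProbabilityTheory Matrix
open scoped Topology ENNReal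

theorem Real.enorm_sq (a : ℝ) : ‖a‖ₑ ^ 2 = ENNReal.ofReal (a * a) := by
  rw [Real.enorm_eq_ofReal_abs, ← ENNReal.ofReal_pow (abs_nonneg a), sq_abs, sq]

theorem Real.enorm_add_pow_four_add_enorm_sub_pow_four (a b : ℝ) :
    ‖a + b‖ₑ ^ 4 + ‖a - b‖ₑ ^ 4
      = 2 * ‖a‖ₑ ^ 4 + 12 * (‖a‖ₑ ^ 2 * ‖b‖ₑ ^ 2) + 2 * ‖b‖ₑ ^ 4 := by
  simp only [enorm_eq_nnnorm]
  norm_cast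
  ext
  push_cast
  simp only [Real.norm_eq_abs, sq_abs, Even.pow_abs (by decide : Even 4)]
  ring

theorem ENNReal.tsum_inv_add_one_sq_ne_top : ∑' n : ℕ, ((n + 1 : ℝ≥0∞) ^ 2)⁻¹ ≠ ∞ := by
  have hs : Summable fun n : ℕ => (((n + 1 : ℕ) : ℝ) ^ 2)⁻¹ :=
    (summable_nat_add_iff 1).2 (Real.summable_nat_pow_inv.2 (by norm_num))
  convert ENNReal.ofReal_ne_top (r := ∑' n : ℕ, (((n + 1 : ℕ) : ℝ) ^ 2)⁻¹)
  rw [ENNReal.ofReal_tsum_of_nonneg (fun n => by positivity) hs]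
  refine tsum_congr fun n => ?_
  rw [ENNReal.ofReal_inv_of_pos (by positivity), ENNReal.ofReal_pow (by positivity),
    ENNReal.ofReal_natCast, Nat.cast_add_one]

theorem ENNReal.tsum_ne_top_of_add_one_sq_mul_le {a : ℕ → ℝ≥0∞} {C : ℝ≥0∞} (hC : C ≠ ∞)
    (h : ∀ n : ℕ, (n + 1 : ℝ≥0∞) ^ 2 * a n ≤ C) : ∑' n, a n ≠ ∞ := by
  refine ne_top_of_le_ne_top (ENNReal.mul_ne_top hC ENNReal.tsum_inv_add_one_sq_ne_top) ?_
  rw [← ENNReal.tsum_mul_left]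
  refine ENNReal.tsum_le_tsum fun n => ?_
  rw [← div_eq_mul_inv, ENNReal.le_div_iff_mul_le (by simp) (by simp), mul_comm]
  exact h n

theorem ae_tendsto_zero_of_tsum_lintegral_enorm_pow_ne_top {Ω E : Type*} [MeasurableSpace Ω]
    [NormedAddCommGroup E] {P : Measure Ω} {Z : ℕ → Ω → E}
    (hZ : ∀ k, AEStronglyMeasurable (Z k) P) {p : ℕ} (hp : p ≠ 0)
    (h : ∑' k, ∫⁻ ω, ‖Z k ω‖ₑ ^ p ∂P ≠ ∞) :
    ∀ᵐ ω ∂P, Tendsto (fun k => Z k ω) atTop (𝓝 0) := by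
  rw [← lintegral_tsum fun k => (hZ k).enorm.pow_const p] at h
  filter_upwards [ae_lt_top' (by fun_prop) h] with ω hω
  have hpow := ENNReal.tendsto_atTop_zero_of_tsum_ne_top hω.ne
  rw [tendsto_zero_iff_enorm_tendsto_zero]
  have := ((ENNReal.continuous_rpow_const (y := (p⁻¹ : ℝ))).tendsto 0).comp hpow
  simpa only [Function.comp_def, ENNReal.pow_rpow_inv_natCast hp,
    ENNReal.zero_rpow_of_pos (by positivity : (0 : ℝ) < (p : ℝ)⁻¹)] using this

variable {ι : Type*} [Fintype ι]

theorem sum_enorm_sq_eq_one {x : ι → ℝ} (hx : x ⬝ᵥ x = 1) : ∑ j, ‖x j‖ₑ ^ 2 = 1 := by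
  simp_rw [Real.enorm_sq]
  rw [← ENNReal.ofReal_sum_of_nonneg fun j _ => mul_self_nonneg (x j)]
  exact (congrArg ENNReal.ofReal hx).trans ENNReal.ofReal_one

theorem lintegral_enorm_pow_four_le_one {μ : Measure (ι → ℝ)} [IsProbabilityMeasure μ]
    (hsphere : ∀ᵐ x ∂μ, x ⬝ᵥ x = 1) (i : ι) : ∫⁻ x, ‖x i‖ₑ ^ 4 ∂μ ≤ 1 := by
  calc ∫⁻ x, ‖x i‖ₑ ^ 4 ∂μ ≤ ∫⁻ _, 1 ∂μ := by
        refine lintegral_mono_ae (hsphere.mono fun x hx => ?_)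
        rw [show 4 = 2 * 2 from rfl, pow_mul]
        exact pow_le_one₀ bot_le (sum_enorm_sq_eq_one hx ▸
          Finset.single_le_sum (f := fun j => ‖x j‖ₑ ^ 2) (fun j _ => bot_le) (Finset.mem_univ i))
    _ = 1 := by simp

variable [DecidableEq ι]

theorem exists_mul_transpose_eq_one_mulVec_apply (u : ι → ℝ) (hu : u ⬝ᵥ u = 1)
    (i : ι) : ∃ A : Matrix ι ι ℝ, A * Aᵀ = 1 ∧ ∀ x, (A *ᵥ x) i = u ⬝ᵥ x := by
  have hu' : ∑ j, u j ^ 2 = 1 := by simpa [dotProduct, sq] using hu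
  have hon : Orthonormal ℝ (({i} : Set ι).domRestrict fun _ => WithLp.toLp 2 u) := by
    rw [orthonormal_iff_ite]
    rintro ⟨j, rfl⟩ ⟨k, rfl⟩
    simp [EuclideanSpace.norm_eq, hu']
  obtain ⟨b, hb⟩ := hon.exists_orthonormalBasis_extension_of_card_eq (by simp)
  refine ⟨((EuclideanSpace.basisFun ι ℝ).toBasis.toMatrix b)ᵀ, ?_, fun x => ?_⟩
  · simpa using
      (EuclideanSpace.basisFun ι ℝ).toMatrix_orthonormalBasis_conjTranspose_mul_self b
  · simp [mulVec, dotProduct, Module.Basis.toMatrix_apply, hb i rfl]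

def IsOrthogonallyInvariant (μ : Measure (ι → ℝ)) : Prop :=
  ∀ A : Matrix ι ι ℝ, A * Aᵀ = 1 → μ.map (A *ᵥ ·) = μ

namespace IsOrthogonallyInvariant

variable {μ : Measure (ι → ℝ)}

theorem lintegral_comp_mulVec (hμ : IsOrthogonallyInvariant μ) {A : Matrix ι ι ℝ}
    (hA : A * Aᵀ = 1) {g : (ι → ℝ) → ℝ≥0∞} (hg : Measurable g) :
    ∫⁻ x, g (A *ᵥ x) ∂μ = ∫⁻ x, g x ∂μ := by
  rw [← lintegral_map hg (Continuous.measurable (by fun_prop)), hμ A hA]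

theorem lintegral_enorm_dotProduct_pow_four (hμ : IsOrthogonallyInvariant μ) (v : ι → ℝ)
    (i : ι) :
    ∫⁻ x, ‖v ⬝ᵥ x‖ₑ ^ 4 ∂μ = ‖v ⬝ᵥ v‖ₑ ^ 2 * ∫⁻ x, ‖x i‖ₑ ^ 4 ∂μ := by
  rcases eq_or_ne v 0 with rfl | hv
  · simp
  have hvv : 0 ≤ v ⬝ᵥ v := Finset.sum_nonneg fun j _ => mul_self_nonneg (v j)
  set r := √(v ⬝ᵥ v)
  have hr2 : r ^ 2 = v ⬝ᵥ v := Real.sq_sqrt hvv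
  have hr : r ≠ 0 := by
    rw [Ne, Real.sqrt_eq_zero hvv, dotProduct_self_eq_zero]
    exact hv
  have hu : (r⁻¹ • v) ⬝ᵥ (r⁻¹ • v) = 1 := by
    rw [smul_dotProduct, dotProduct_smul, ← hr2, smul_eq_mul, smul_eq_mul]
    field_simp
  obtain ⟨A, hA, hAi⟩ := exists_mul_transpose_eq_one_mulVec_apply _ hu i
  have hdot (x : ι → ℝ) : v ⬝ᵥ x = r * (A *ᵥ x) i := by
    rw [hAi, smul_dotProduct, smul_eq_mul, mul_inv_cancel_left₀ hr]
  calc ∫⁻ x, ‖v ⬝ᵥ x‖ₑ ^ 4 ∂μ = ∫⁻ x, ‖r‖ₑ ^ 4 * ‖(A *ᵥ x) i‖ₑ ^ 4 ∂μ := by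
        simp_rw [hdot, enorm_mul, mul_pow]
    _ = ‖r‖ₑ ^ 4 * ∫⁻ x, ‖x i‖ₑ ^ 4 ∂μ := by
        rw [lintegral_const_mul' _ _ (by simp),
          hμ.lintegral_comp_mulVec hA (g := fun y => ‖y i‖ₑ ^ 4) (by fun_prop)]
    _ = ‖v ⬝ᵥ v‖ₑ ^ 2 * ∫⁻ x, ‖x i‖ₑ ^ 4 ∂μ := by
        rw [← hr2, enorm_pow, ← pow_mul]

theorem lintegral_enorm_pow_four_eq (hμ : IsOrthogonallyInvariant μ) (i j : ι) :
    ∫⁻ x, ‖x j‖ₑ ^ 4 ∂μ = ∫⁻ x, ‖x i‖ₑ ^ 4 ∂μ := by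
  simpa using hμ.lintegral_enorm_dotProduct_pow_four (Pi.single j 1) i

theorem three_mul_lintegral_enorm_sq_mul_enorm_sq (hμ : IsOrthogonallyInvariant μ)
    {i j : ι} (hij : i ≠ j) (hfin : ∫⁻ x, ‖x i‖ₑ ^ 4 ∂μ ≠ ∞) :
    3 * ∫⁻ x, ‖x i‖ₑ ^ 2 * ‖x j‖ₑ ^ 2 ∂μ = ∫⁻ x, ‖x i‖ₑ ^ 4 ∂μ := by
  have hdiag (s : ℝ) (hs : s ^ 2 = 1) :
      ∫⁻ x, ‖x i + s * x j‖ₑ ^ 4 ∂μ = 4 * ∫⁻ x, ‖x i‖ₑ ^ 4 ∂μ := by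
    have := hμ.lintegral_enorm_dotProduct_pow_four (Pi.single i 1 + Pi.single j s) i
    simp [add_dotProduct, dotProduct_add, single_dotProduct, dotProduct_single, hij,
      hij.symm] at this
    rw [this, ← sq, hs, one_add_one_eq_two, ← Nat.cast_ofNat, Real.enorm_natCast]
    norm_num
  set M := ∫⁻ x, ‖x i‖ₑ ^ 4 ∂μ
  have hplus : ∫⁻ x, ‖x i + x j‖ₑ ^ 4 ∂μ = 4 * M := by simpa using hdiag 1 (by norm_num)
  have hminus : ∫⁻ x, ‖x i - x j‖ₑ ^ 4 ∂μ = 4 * M := by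
    simpa [← sub_eq_add_neg] using hdiag (-1) (by norm_num)
  have hsum : ∫⁻ x, ‖x i + x j‖ₑ ^ 4 ∂μ + ∫⁻ x, ‖x i - x j‖ₑ ^ 4 ∂μ
      = 2 * M + 12 * ∫⁻ x, ‖x i‖ₑ ^ 2 * ‖x j‖ₑ ^ 2 ∂μ + 2 * M := by
    rw [← lintegral_add_left (by fun_prop)]
    simp_rw [Real.enorm_add_pow_four_add_enorm_sub_pow_four]
    rw [lintegral_add_left (by fun_prop), lintegral_add_left (by fun_prop),
      lintegral_const_mul _ (by fun_prop), lintegral_const_mul _ (by fun_prop),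
      lintegral_const_mul _ (by fun_prop), hμ.lintegral_enorm_pow_four_eq i j]
  rw [hplus, hminus] at hsum
  have h4 : 4 * M + 4 * M = 4 * M + 4 * (3 * ∫⁻ x, ‖x i‖ₑ ^ 2 * ‖x j‖ₑ ^ 2 ∂μ) := by
    rw [hsum]; ring
  have := (ENNReal.add_right_inj (ENNReal.mul_ne_top (by norm_num) hfin)).1 h4
  exact ((ENNReal.mul_right_inj (by norm_num) (by norm_num)).1 this).symm

theorem card_mul_card_add_two_mul_lintegral_enorm_pow_four [IsProbabilityMeasure μ]
    (hμ : IsOrthogonallyInvariant μ) (hsphere : ∀ᵐ x ∂μ, x ⬝ᵥ x = 1) (i : ι) :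
    (Fintype.card ι * (Fintype.card ι + 2) : ℝ≥0∞) * ∫⁻ x, ‖x i‖ₑ ^ 4 ∂μ = 3 := by
  have hfin : ∫⁻ x, ‖x i‖ₑ ^ 4 ∂μ ≠ ∞ :=
    ne_top_of_le_ne_top ENNReal.one_ne_top (lintegral_enorm_pow_four_le_one hsphere i)
  have hmixed (j k : ι) : 3 * ∫⁻ x, ‖x j‖ₑ ^ 2 * ‖x k‖ₑ ^ 2 ∂μ
      = (if j = k then 3 else 1) * ∫⁻ x, ‖x i‖ₑ ^ 4 ∂μ := by
    rcases eq_or_ne j k with rfl | hjk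
    · simp_rw [← pow_add, if_pos, hμ.lintegral_enorm_pow_four_eq i j]
    · rw [if_neg hjk, one_mul, hμ.three_mul_lintegral_enorm_sq_mul_enorm_sq hjk
        (hμ.lintegral_enorm_pow_four_eq i j ▸ hfin), hμ.lintegral_enorm_pow_four_eq i j]
  have hcount (j : ι) : ∑ k : ι, (if j = k then (3 : ℝ≥0∞) else 1) = Fintype.card ι + 2 :=
    calc ∑ k : ι, (if j = k then (3 : ℝ≥0∞) else 1)
        = ∑ k : ι, (1 + if j = k then 2 else 0) := by
          congr! 1 with k; split_ifs <;> norm_num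
      _ = Fintype.card ι + 2 := by simp [Finset.sum_add_distrib]
  symm
  calc (3 : ℝ≥0∞) = 3 * ∫⁻ x, (∑ j, ‖x j‖ₑ ^ 2) ^ 2 ∂μ := by
        rw [lintegral_congr_ae (hsphere.mono fun x hx => by rw [sum_enorm_sq_eq_one hx, one_pow])]
        simp
    _ = ∑ j, ∑ k, 3 * ∫⁻ x, ‖x j‖ₑ ^ 2 * ‖x k‖ₑ ^ 2 ∂μ := by
        simp_rw [sq (∑ j : ι, _), Finset.sum_mul_sum]
        rw [lintegral_finsetSum _ fun j _ => by fun_prop, Finset.mul_sum]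
        congr! 1 with j
        rw [lintegral_finsetSum _ fun k _ => by fun_prop, Finset.mul_sum]
    _ = Fintype.card ι * (Fintype.card ι + 2) * ∫⁻ x, ‖x i‖ₑ ^ 4 ∂μ := by
        simp_rw [hmixed, ← Finset.sum_mul, hcount]
        simp
        ring

end IsOrthogonallyInvariant

section RandomVectors

variable {Ω : Type*} [MeasurableSpace Ω] {P : Measure Ω} {X Y : Ω → ι → ℝ}

theorem isOrthogonallyInvariant_map (hX : Measurable X)
    (h : ∀ A : Matrix ι ι ℝ, A * Aᵀ = 1 → P.map (fun ω => A *ᵥ X ω) = P.map X) :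
    IsOrthogonallyInvariant (P.map X) := fun A hA => by
  rw [Measure.map_map (Continuous.measurable (by fun_prop)) hX]
  exact h A hA

theorem lintegral_enorm_dotProduct_pow_four_of_indepFun [IsFiniteMeasure P] (hX : Measurable X)
    (hY : Measurable Y) (hXY : IndepFun X Y P) (hμ : IsOrthogonallyInvariant (P.map X))
    (i : ι) :
    ∫⁻ ω, ‖X ω ⬝ᵥ Y ω‖ₑ ^ 4 ∂P
      = (∫⁻ ω, ‖Y ω ⬝ᵥ Y ω‖ₑ ^ 2 ∂P) * ∫⁻ x, ‖x i‖ₑ ^ 4 ∂(P.map X) := by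
  have hdot : Measurable fun p : (ι → ℝ) × (ι → ℝ) => ‖p.1 ⬝ᵥ p.2‖ₑ ^ 4 :=
    Continuous.measurable (by fun_prop)
  rw [← lintegral_map hdot (hX.prodMk hY),
    (indepFun_iff_map_prod_eq_prod_map_map hX.aemeasurable hY.aemeasurable).1 hXY,
    lintegral_prod_symm _ hdot.aemeasurable]
  simp_rw [dotProduct_comm _ (_ : ι → ℝ), hμ.lintegral_enorm_dotProduct_pow_four _ i]
  rw [lintegral_mul_const _ (Continuous.measurable (by fun_prop)),
    lintegral_map (Continuous.measurable (by fun_prop)) hY]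

theorem card_mul_card_add_two_mul_lintegral_enorm_dotProduct_pow_four [IsProbabilityMeasure P]
    [Nonempty ι] (hX : Measurable X) (hY : Measurable Y) (hXY : IndepFun X Y P)
    (hinv : ∀ A : Matrix ι ι ℝ, A * Aᵀ = 1 → P.map (fun ω => A *ᵥ X ω) = P.map X)
    (hXsphere : ∀ᵐ ω ∂P, X ω ⬝ᵥ X ω = 1) (hYsphere : ∀ᵐ ω ∂P, Y ω ⬝ᵥ Y ω = 1) :
    (Fintype.card ι * (Fintype.card ι + 2) : ℝ≥0∞) * ∫⁻ ω, ‖X ω ⬝ᵥ Y ω‖ₑ ^ 4 ∂P = 3 := by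
  have := Measure.isProbabilityMeasure_map (μ := P) hX.aemeasurable
  have hμ := isOrthogonallyInvariant_map hX hinv
  have hXlaw : ∀ᵐ x ∂P.map X, x ⬝ᵥ x = 1 :=
    (ae_map_iff hX.aemeasurable (measurableSet_eq_fun (by fun_prop) (by fun_prop))).2 hXsphere
  have hYmoment : ∫⁻ ω, ‖Y ω ⬝ᵥ Y ω‖ₑ ^ 2 ∂P = 1 := by
    rw [lintegral_congr_ae (hYsphere.mono fun ω hω => by rw [hω])]
    simp
  rw [lintegral_enorm_dotProduct_pow_four_of_indepFun hX hY hXY hμ (Classical.arbitrary ι),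
    hYmoment, one_mul, hμ.card_mul_card_add_two_mul_lintegral_enorm_pow_four hXlaw]

end RandomVectors

/-- if for each `n` the random vector `X_n` is uniformly distributed on the
unit sphere `S^{n−1} ⊂ ℝ^n` (its law is rotation invariant and supported on the sphere) and
`Y_n` is an independent random unit vector, then `X_nᵀ Y_n → 0` almost surely as `n → ∞`. -/
theorem dispersion_bias_stmt12
    (Ω : Type) [MeasurableSpace Ω] (P : Measure Ω) [IsProbabilityMeasure P]
    (X Y : (n : ℕ) → Ω → Fin n → ℝ)
    (hXmeas : ∀ n, Measurable (X n)) (hYmeas : ∀ n, Measurable (Y n))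
    (hXsphere : ∀ n, 1 ≤ n → ∀ᵐ ω ∂P, ∑ i, X n ω i ^ 2 = 1)
    (hXinv : ∀ n, 1 ≤ n → ∀ A : Matrix (Fin n) (Fin n) ℝ, A * A.transpose = 1 →
      P.map (fun ω => A.mulVec (X n ω)) = P.map (X n))
    (hYsphere : ∀ n, 1 ≤ n → ∀ᵐ ω ∂P, ∑ i, Y n ω i ^ 2 = 1)
    (hindep : ∀ n, IndepFun (X n) (Y n) P) :
    ∀ᵐ ω ∂P, Tendsto (fun n => ∑ i, X n ω i * Y n ω i) atTop (𝓝 0) := by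
  have hunit {n : ℕ} (v : Fin n → ℝ) (hv : ∑ i, v i ^ 2 = 1) : v ⬝ᵥ v = 1 := by
    simpa [dotProduct, sq] using hv
  refine ae_tendsto_zero_of_tsum_lintegral_enorm_pow_ne_top (Z := fun n ω => X n ω ⬝ᵥ Y n ω)
    (fun n => ((continuous_fst.dotProduct continuous_snd).measurable.comp
      ((hXmeas n).prodMk (hYmeas n))).aestronglyMeasurable) four_ne_zero
    (ENNReal.tsum_ne_top_of_add_one_sq_mul_le (C := 6) (by simp) fun n => ?_)
  rcases Nat.eq_zero_or_pos n with rfl | hn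
  · simp
  have : Nonempty (Fin n) := ⟨⟨0, hn⟩⟩
  have hmoment := card_mul_card_add_two_mul_lintegral_enorm_dotProduct_pow_four (hXmeas n)
    (hYmeas n) (hindep n) (hXinv n hn) ((hXsphere n hn).mono fun ω => hunit _)
    ((hYsphere n hn).mono fun ω => hunit _)
  rw [Fintype.card_fin] at hmoment
  calc (n + 1 : ℝ≥0∞) ^ 2 * ∫⁻ ω, ‖X n ω ⬝ᵥ Y n ω‖ₑ ^ 4 ∂P
      ≤ 2 * (n * (n + 2)) * ∫⁻ ω, ‖X n ω ⬝ᵥ Y n ω‖ₑ ^ 4 ∂P := by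
        gcongr
        exact_mod_cast (by nlinarith : (n + 1) ^ 2 ≤ 2 * (n * (n + 2)))
    _ = 6 := by
        rw [mul_assoc, hmoment]
        norm_num
end
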